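/- Let m1, m2 be positive integers, β1, β2 > 0, and let X and Y be independent random variables such that X is Gamma(m1, β1)-distributed and Y is Gamma(m2, β2)-distributed. Then for every c > 0, the survival probability of the product satisfies P(X·Y > c) = Σ_{i=0}^{m1−1} ((β1 c)^i / i!) · (β2^{m2} / Γ(m2)) · ∫_0^∞ y^{m2−i−1} · exp(−β1 c / y − β2 y) dy. -/

import Mathlib

open MeasureTheory ProbabilityTheory Real

/-!
Conditioning on `Y` gives `P(XY > c) = E[S(c / Y); Y > 0]`, where `S(t) = P(X > t)`. For an
integer shape `m₁`, `S` is the Erlang survival function `exp(-β₁ t) Σ_{i<m₁} (β₁ t)^i / i!`: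
its derivative telescopes to minus the Gamma density and it vanishes at infinity. Multiplying by
the density of `Y` and distributing over the finite sum gives the terms of the formula. All
integrands are nonnegative and their Lebesgue integrals add up to a probability, so each is
finite and equals the corresponding Bochner integral.
-/

open Finset Set Filter Topology
open scoped Nat ENNReal

namespace ProbabilityTheory

noncomputable def erlangSurvival (m : ℕ) (β t : ℝ) : ℝ :=
  exp (-(β * t)) * ∑ i ∈ range m, (β * t) ^ i / i !

theorem hasDerivAt_erlangSurvival (n : ℕ) (β x : ℝ) :
    HasDerivAt (erlangSurvival (n + 1) β) (-(β ^ (n + 1) / n ! * x ^ n * exp (-(β * x)))) x := by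
  have hexp : HasDerivAt (fun t => exp (-(β * t))) (-β * exp (-(β * x))) x := by
    simpa [mul_comm] using ((hasDerivAt_id x).const_mul β).neg.exp
  induction n with
  | zero =>
    convert hexp using 1
    · ext t
      simp [erlangSurvival]
    · ring
  | succ n ih =>
    have hlin : HasDerivAt (fun t => β * t) β x := by simpa using (hasDerivAt_id x).const_mul β
    have hsplit : erlangSurvival (n + 1 + 1) β =
        fun t => erlangSurvival (n + 1) β t + exp (-(β * t)) * ((β * t) ^ (n + 1) / (n + 1)!) := by
      ext t
      simp only [erlangSurvival, sum_range_succ _ (n + 1)]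
      ring
    rw [hsplit]
    refine (ih.add (hexp.mul ((hlin.fun_pow (n + 1)).div_const _))).congr_deriv ?_
    simp only [Nat.factorial_succ, Nat.cast_mul, Nat.cast_succ, Nat.add_sub_cancel]
    field_simp
    ring

theorem tendsto_erlangSurvival_atTop (m : ℕ) {β : ℝ} (hβ : 0 < β) :
    Tendsto (erlangSurvival m β) atTop (𝓝 0) := by
  have hβt : Tendsto (fun t => β * t) atTop atTop := tendsto_id.const_mul_atTop hβ
  have hterm : ∀ i, Tendsto (fun t => (β * t) ^ i * exp (-(β * t)) / i !) atTop (𝓝 0) := fun i => by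
    simpa using ((tendsto_pow_mul_exp_neg_atTop_nhds_zero i).comp hβt).div_const (i ! : ℝ)
  have hsum := tendsto_finsetSum (range m) fun i _ => hterm i
  rw [sum_const_zero] at hsum
  refine hsum.congr fun t => ?_
  simp only [erlangSurvival, mul_sum]
  exact sum_congr rfl fun i _ => by ring

theorem gammaPDFReal_natCast_succ (n : ℕ) (β : ℝ) {x : ℝ} (hx : 0 ≤ x) :
    gammaPDFReal (n + 1 : ℕ) β x = β ^ (n + 1) / n ! * x ^ n * exp (-(β * x)) := by
  rw [gammaPDFReal, if_pos hx, rpow_natCast, Nat.cast_succ, add_sub_cancel_right, rpow_natCast,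
    Gamma_nat_eq_factorial]

theorem gammaMeasure_Ioi {m : ℕ} (hm : 0 < m) {β t : ℝ} (hβ : 0 < β) (ht : 0 ≤ t) :
    gammaMeasure m β (Ioi t) = ENNReal.ofReal (erlangSurvival m β t) := by
  obtain ⟨n, rfl⟩ := Nat.exists_eq_succ_of_ne_zero hm.ne'
  set density := fun x => β ^ (n + 1) / n ! * x ^ n * exp (-(β * x))
  have hderiv : ∀ x ∈ Ici t, HasDerivAt (-erlangSurvival (n + 1) β) (density x) x :=
    fun x _ => (hasDerivAt_erlangSurvival n β x).neg.congr_deriv (neg_neg _)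
  have hnonneg : ∀ x ∈ Ioi t, 0 ≤ density x := fun x hx => by
    have := ht.trans hx.le
    positivity
  have hlim : Tendsto (-erlangSurvival (n + 1) β) atTop (𝓝 0) :=
    neg_zero (G := ℝ) ▸ (tendsto_erlangSurvival_atTop (n + 1) hβ).neg
  have hpdf : ∀ x ∈ Ioi t, gammaPDF (n + 1 : ℕ) β x = ENNReal.ofReal (density x) := fun x hx => by
    rw [gammaPDF, gammaPDFReal_natCast_succ n β (ht.trans hx.le)]
  rw [gammaMeasure, withDensity_apply _ measurableSet_Ioi,
    setLIntegral_congr_fun measurableSet_Ioi hpdf,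
    ← ofReal_integral_eq_lintegral_ofReal (integrableOn_Ioi_deriv_of_nonneg' hderiv hnonneg hlim)
      ((ae_restrict_iff' measurableSet_Ioi).mpr (ae_of_all _ hnonneg)),
    integral_Ioi_of_hasDerivAt_of_nonneg' hderiv hnonneg hlim]
  simp

theorem gammaMeasure_Iic_zero (a r : ℝ) : gammaMeasure a r (Iic 0) = 0 := by
  rw [gammaMeasure, withDensity_apply _ measurableSet_Iic, ← setLIntegral_congr Iio_ae_eq_Iic]
  exact lintegral_gammaPDF_of_nonpos le_rfl

theorem ae_pos_gammaMeasure (a r : ℝ) : ∀ᵐ x ∂gammaMeasure a r, 0 < x := by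
  rw [ae_iff]
  exact measure_mono_null (fun x hx => not_lt.mp hx) (gammaMeasure_Iic_zero a r)

theorem setLIntegral_gammaMeasure (a r : ℝ) (g : ℝ → ℝ≥0∞) {s : Set ℝ} (hs : MeasurableSet s) :
    ∫⁻ y in s, g y ∂gammaMeasure a r = ∫⁻ y in s, gammaPDF a r y * g y :=
  setLIntegral_withDensity_eq_setLIntegral_mul_non_measurable _
    (measurable_gammaPDFReal a r).ennreal_ofReal g hs (ae_of_all _ fun _ => ENNReal.ofReal_lt_top)

theorem IndepFun.measure_preimage_prod_eq_lintegral {Ω α γ : Type*} [MeasurableSpace Ω]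
    [MeasurableSpace α] [MeasurableSpace γ] {P : Measure Ω} [IsFiniteMeasure P]
    {X : Ω → α} {Y : Ω → γ} (hInd : IndepFun X Y P) (hX : Measurable X) (hY : Measurable Y)
    {S : Set (α × γ)} (hS : MeasurableSet S) :
    P ((fun ω => (X ω, Y ω)) ⁻¹' S) = ∫⁻ y, P.map X ((fun x => (x, y)) ⁻¹' S) ∂P.map Y := by
  rw [← Measure.map_apply (hX.prodMk hY) hS,
    (indepFun_iff_map_prod_eq_prod_map_map hX.aemeasurable hY.aemeasurable).mp hInd,
    Measure.prod_apply_symm hS]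

theorem lintegral_measure_lt_mul {μ ν : Measure ℝ} (hν : ∀ᵐ y ∂ν, 0 < y) (c : ℝ) :
    ∫⁻ y, μ {x | c < x * y} ∂ν = ∫⁻ y in Ioi 0, μ (Ioi (c / y)) ∂ν := by
  conv_lhs => rw [← Measure.restrict_eq_self_of_ae_mem (s := Ioi 0) hν]
  refine setLIntegral_congr_fun measurableSet_Ioi fun y hy => ?_
  congr 1
  ext x
  simp [div_lt_iff₀ (show (0 : ℝ) < y from hy)]

theorem gammaPDFReal_mul_erlangSurvival_div (a r : ℝ) (m : ℕ) (β c : ℝ) {y : ℝ} (hy : 0 < y) :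
    gammaPDFReal a r y * erlangSurvival m β (c / y) =
      ∑ i ∈ range m, (β * c) ^ i / i ! * (r ^ a / Gamma a) *
        (y ^ (a - i - 1) * exp (-(β * c) / y - r * y)) := by
  rw [gammaPDFReal, if_pos hy.le, erlangSurvival, mul_sum, mul_sum]
  refine sum_congr rfl fun i _ => ?_
  have hexp : exp (-(β * c) / y - r * y) = exp (-(β * (c / y))) * exp (-(r * y)) := by
    rw [← exp_add]
    ring_nf
  rw [sub_right_comm, rpow_sub hy (a - 1) i, rpow_natCast y i, hexp, ← mul_div_assoc β c y,
    div_pow]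
  field_simp

theorem toReal_sum_lintegral_ofReal {ι α : Type*} [MeasurableSpace α] {μ : Measure α}
    {s : Finset ι} {f : ι → α → ℝ} (hf : ∀ i ∈ s, 0 ≤ᵐ[μ] f i)
    (hfm : ∀ i ∈ s, AEStronglyMeasurable (f i) μ)
    (hfin : ∑ i ∈ s, ∫⁻ x, ENNReal.ofReal (f i x) ∂μ ≠ ∞) :
    (∑ i ∈ s, ∫⁻ x, ENNReal.ofReal (f i x) ∂μ).toReal = ∑ i ∈ s, ∫ x, f i x ∂μ := by
  rw [ENNReal.toReal_sum (ENNReal.sum_ne_top.mp hfin)]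
  exact sum_congr rfl fun i hi => (integral_eq_lintegral_of_nonneg_ae (hf i hi) (hfm i hi)).symm

theorem measure_lt_mul_eq_setLIntegral_erlangSurvival {Ω : Type*} [MeasurableSpace Ω]
    {P : Measure Ω} [IsFiniteMeasure P] {X Y : Ω → ℝ} (hX : Measurable X) (hY : Measurable Y)
    (hInd : IndepFun X Y P) {m : ℕ} (hm : 0 < m) {β : ℝ} (hβ : 0 < β)
    (hXd : P.map X = gammaMeasure m β) (hY_pos : ∀ᵐ y ∂P.map Y, 0 < y) {c : ℝ} (hc : 0 ≤ c) :
    P {ω | c < X ω * Y ω} =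
      ∫⁻ y in Ioi 0, ENNReal.ofReal (erlangSurvival m β (c / y)) ∂P.map Y := by
  have hS : MeasurableSet {p : ℝ × ℝ | c < p.1 * p.2} :=
    measurableSet_lt measurable_const (measurable_fst.mul measurable_snd)
  refine (hInd.measure_preimage_prod_eq_lintegral hX hY hS).trans ?_
  rw [hXd]
  exact (lintegral_measure_lt_mul hY_pos c).trans <|
    setLIntegral_congr_fun measurableSet_Ioi fun y (hy : 0 < y) =>
      gammaMeasure_Ioi hm hβ (div_nonneg hc hy.le)

end ProbabilityTheory

/-- For positive integers `m1, m2` and rates `β1, β2 > 0`, if `X ~ Gamma(m1, β1)` and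
`Y ~ Gamma(m2, β2)` are independent, then for every `c > 0`,
`P(X·Y > c) = Σ_{i=0}^{m1−1} ((β1 c)^i / i!) · (β2^{m2} / Γ(m2)) ·
  ∫_0^∞ y^{m2−i−1} exp(−β1 c / y − β2 y) dy`. -/
theorem gamma_product_survival
    {Ω : Type*} [MeasurableSpace Ω] (P : Measure Ω) [IsProbabilityMeasure P]
    (m1 m2 : ℕ) (hm1 : 0 < m1) (hm2 : 0 < m2)
    (β1 β2 : ℝ) (hβ1 : 0 < β1) (hβ2 : 0 < β2)
    (X Y : Ω → ℝ) (hX : Measurable X) (hY : Measurable Y)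
    (hXd : Measure.map X P = gammaMeasure m1 β1)
    (hYd : Measure.map Y P = gammaMeasure m2 β2)
    (hInd : IndepFun X Y P)
    (c : ℝ) (hc : 0 < c) :
    (P {ω | c < X ω * Y ω}).toReal =
      ∑ i ∈ Finset.range m1,
        ((β1 * c) ^ i / (Nat.factorial i)) * (β2 ^ m2 / Real.Gamma m2) *
          ∫ y in Set.Ioi (0 : ℝ),
            y ^ ((m2 : ℝ) - i - 1) * Real.exp (-(β1 * c) / y - β2 * y) := by
  set term : ℕ → ℝ → ℝ := fun i y => (β1 * c) ^ i / i ! * (β2 ^ m2 / Gamma m2) *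
    (y ^ ((m2 : ℝ) - i - 1) * exp (-(β1 * c) / y - β2 * y))
  have hterm_nonneg : ∀ i, ∀ y ∈ Ioi (0 : ℝ), 0 ≤ term i y := fun i y (hy : 0 < y) => by
    positivity
  have hterm_meas : ∀ i, Measurable (term i) := fun i => by fun_prop
  have hsurv :
      P {ω | c < X ω * Y ω} = ∑ i ∈ range m1, ∫⁻ y in Ioi 0, ENNReal.ofReal (term i y) := by
    rw [measure_lt_mul_eq_setLIntegral_erlangSurvival hX hY hInd hm1 hβ1 hXd
        (hYd ▸ ae_pos_gammaMeasure _ _) hc.le, hYd,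
      setLIntegral_gammaMeasure _ _ _ measurableSet_Ioi,
      ← lintegral_finsetSum' _ fun i _ => (hterm_meas i).ennreal_ofReal.aemeasurable]
    refine setLIntegral_congr_fun measurableSet_Ioi fun y hy => ?_
    rw [gammaPDF, ← ENNReal.ofReal_mul (gammaPDFReal_nonneg (Nat.cast_pos.mpr hm2) hβ2 y),
      gammaPDFReal_mul_erlangSurvival_div _ _ _ _ _ hy, rpow_natCast,
      ENNReal.ofReal_sum_of_nonneg fun i _ => hterm_nonneg i y hy]
  rw [hsurv, toReal_sum_lintegral_ofReal
    (fun i _ => (ae_restrict_iff' measurableSet_Ioi).mpr (ae_of_all _ (hterm_nonneg i)))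
    (fun i _ => (hterm_meas i).aestronglyMeasurable) (hsurv ▸ measure_ne_top P _)]
  exact sum_congr rfl fun i _ => integral_const_mul _ _
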